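/- arXiv:2310.10980 — 2 statements merged into one kernel-verified Lean document; each statement's English description precedes it below -/
import Mathlib

section
/- Let n ≥ 1 be a real number and m ≥ 1 a natural number. Let k_1, …, k_m > 0 be pipe resistances and q_1 ≥ q_2 ≥ ⋯ ≥ q_m ≥ 0 flow rates with q_1 > 0; set q_{m+1} = 0, S_i = k_1 + ⋯ + k_i, and Δh = ∑_{i=1}^{m} k_i · q_i^n. Then the total discrete operation time t_d = ∑_{i=1}^{m} (q_i − q_{i+1}) · (S_i / Δh)^(1/n) satisfies t_d ≤ m^(1 − 1/n). -/
lemma add_rpow_le_rpow_add_real {a b p : ℝ} (ha : 0 ≤ a) (hb : 0 ≤ b) (hp : 1 ≤ p) :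
    a ^ p + b ^ p ≤ (a + b) ^ p := by
  lift a to NNReal using ha
  lift b to NNReal using hb
  exact_mod_cast NNReal.add_rpow_le_rpow_add a b hp

/-- The total discrete operation time is at most `m^(1 - 1/n)`.
Here `k i` and `q i` for `i = 0, …, m-1` are the resistances `k_1, …, k_m` and
flows `q_1, …, q_m` of the paper; the hypothesis `q m = 0` encodes the
convention `q_{m+1} = 0`. -/
theorem discrete_time_le (n : ℝ) (hn : 1 ≤ n) (m : ℕ) (hm : 1 ≤ m)
    (k q : ℕ → ℝ) (hk : ∀ i < m, 0 < k i)
    (hmono : ∀ i < m, q (i + 1) ≤ q i) (hq0 : 0 < q 0) (hqm : q m = 0) :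
    ∑ i ∈ Finset.range m,
        (q i - q (i + 1))
          * ((∑ j ∈ Finset.range (i + 1), k j)
              / (∑ j ∈ Finset.range m, k j * (q j) ^ n)) ^ (1 / n)
      ≤ (m : ℝ) ^ (1 - 1 / n) := by
  have hn0 : (0:ℝ) < n := lt_of_lt_of_le one_pos hn
  have hn' : n ≠ 0 := hn0.ne'
  set T : ℕ → ℝ := fun i => ∑ j ∈ Finset.range i, k j with hTdef
  set Δ : ℝ := ∑ j ∈ Finset.range m, k j * q j ^ n with hΔdef
  -- nonnegativity of q
  have hq_aux : ∀ d : ℕ, 0 ≤ q (m - d) := by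
    intro d
    induction d with
    | zero => simp [hqm]
    | succ d ih =>
      rcases le_or_gt m (d+1) with h | h
      · have : m - (d+1) = m - d ∨ m - (d+1) = 0 := by omega
        rcases this with h' | h'
        · rw [h']; exact ih
        · rw [h']; exact hq0.le
      · have h1 : m - d = (m - (d+1)) + 1 := by omega
        have h2 : m - (d+1) < m := by omega
        have := hmono _ h2
        rw [← h1] at this
        exact le_trans ih this
  have hqnn : ∀ i ≤ m, 0 ≤ q i := by
    intro i hi
    have : i = m - (m - i) := by omega
    rw [this]; exact hq_aux (m - i)
  -- T is nonneg / positive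
  have hTnn : ∀ i ≤ m, 0 ≤ T i := by
    intro i hi
    apply Finset.sum_nonneg
    intro j hj
    exact (hk j (lt_of_lt_of_le (Finset.mem_range.mp hj) hi)).le
  -- Δ positive
  have hΔpos : 0 < Δ := by
    apply Finset.sum_pos'
    · intro j hj
      exact mul_nonneg (hk j (Finset.mem_range.mp hj)).le
        (Real.rpow_nonneg (hqnn j (Finset.mem_range.mp hj).le) n)
    · refine ⟨0, Finset.mem_range.mpr (by omega), ?_⟩
      exact mul_pos (hk 0 (by omega)) (Real.rpow_pos_of_pos hq0 n)
  -- Abel summation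
  have habel : ∑ i ∈ Finset.range m, T (i+1) * (q i ^ n - q (i+1) ^ n) = Δ := by
    have tele : ∑ i ∈ Finset.range m,
        (T i * q i ^ n - T (i+1) * q (i+1) ^ n) = T 0 * q 0 ^ n - T m * q m ^ n :=
      Finset.sum_range_sub' (fun i => T i * q i ^ n) m
    have hT0 : T 0 = 0 := by simp [hTdef]
    have hqmn : q m ^ n = 0 := by rw [hqm, Real.zero_rpow hn']
    rw [hT0, hqmn, zero_mul, mul_zero, sub_zero] at tele
    have expand : ∀ i ∈ Finset.range m,
        T (i+1) * (q i ^ n - q (i+1) ^ n)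
          = k i * q i ^ n + (T i * q i ^ n - T (i+1) * q (i+1) ^ n) := by
      intro i _
      have : T (i+1) = T i + k i := Finset.sum_range_succ k i
      rw [this]; ring
    rw [Finset.sum_congr rfl expand, Finset.sum_add_distrib, tele, add_zero, hΔdef]
  -- key bound on the sum of n-th powers
  have hkey : ∑ i ∈ Finset.range m, (q i - q (i+1)) ^ n * T (i+1) ≤ Δ := by
    rw [← habel]
    apply Finset.sum_le_sum
    intro i hi
    have him : i < m := Finset.mem_range.mp hi
    have hqi1 : 0 ≤ q (i+1) := hqnn (i+1) him
    have hd : 0 ≤ q i - q (i+1) := sub_nonneg.mpr (hmono i him)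
    have hsup : (q i - q (i+1)) ^ n + q (i+1) ^ n ≤ q i ^ n := by
      have := add_rpow_le_rpow_add_real hd hqi1 hn
      rwa [sub_add_cancel] at this
    rw [mul_comm]
    exact mul_le_mul_of_nonneg_left (by linarith) (hTnn (i+1) him)
  -- the summand and its n-th power
  set z : ℕ → ℝ := fun i => (q i - q (i+1)) * (T (i+1) / Δ) ^ (1/n) with hzdef
  have hznn : ∀ i ∈ Finset.range m, 0 ≤ z i := by
    intro i hi
    have him : i < m := Finset.mem_range.mp hi
    exact mul_nonneg (sub_nonneg.mpr (hmono i him))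
      (Real.rpow_nonneg (div_nonneg (hTnn (i+1) him) hΔpos.le) (1/n))
  have hzn : ∀ i ∈ Finset.range m, z i ^ n = (q i - q (i+1)) ^ n * (T (i+1) / Δ) := by
    intro i hi
    have him : i < m := Finset.mem_range.mp hi
    have hd : 0 ≤ q i - q (i+1) := sub_nonneg.mpr (hmono i him)
    have hTΔ : 0 ≤ T (i+1) / Δ := div_nonneg (hTnn (i+1) him) hΔpos.le
    rw [hzdef]
    rw [Real.mul_rpow hd (Real.rpow_nonneg hTΔ _), ← Real.rpow_mul hTΔ, one_div,
      inv_mul_cancel₀ hn', Real.rpow_one]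
  -- sum of z^n is at most 1
  have hzsum : ∑ i ∈ Finset.range m, z i ^ n ≤ 1 := by
    rw [Finset.sum_congr rfl hzn]
    have : ∑ i ∈ Finset.range m, (q i - q (i+1)) ^ n * (T (i+1) / Δ)
        = (∑ i ∈ Finset.range m, (q i - q (i+1)) ^ n * T (i+1)) / Δ := by
      rw [Finset.sum_div]
      exact Finset.sum_congr rfl fun i _ => by ring
    rw [this, div_le_one hΔpos]
    exact hkey
  -- power mean inequality
  have hm0 : (0:ℝ) < m := by exact_mod_cast hm
  have hpm := Real.rpow_arith_mean_le_arith_mean_rpow (Finset.range m)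
    (fun _ => 1 / (m:ℝ)) z (fun i _ => by positivity)
    (by simp [Finset.sum_const, Finset.card_range]; field_simp) hznn hn
  -- hpm : (∑ (1/m) * z i) ^ n ≤ ∑ (1/m) * z i ^ n
  have hS : ∑ i ∈ Finset.range m, (1/(m:ℝ)) * z i = (∑ i ∈ Finset.range m, z i) / m := by
    rw [Finset.sum_div]; exact Finset.sum_congr rfl fun i _ => by ring
  have hS2 : ∑ i ∈ Finset.range m, (1/(m:ℝ)) * z i ^ n
      = (∑ i ∈ Finset.range m, z i ^ n) / m := by
    rw [Finset.sum_div]; exact Finset.sum_congr rfl fun i _ => by ring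
  rw [hS, hS2] at hpm
  have hpm2 : ((∑ i ∈ Finset.range m, z i) / m) ^ n ≤ 1 / m := by
    refine hpm.trans ?_
    gcongr
  -- take n-th roots
  have hsnn : 0 ≤ (∑ i ∈ Finset.range m, z i) / m :=
    div_nonneg (Finset.sum_nonneg hznn) hm0.le
  have hroot : (∑ i ∈ Finset.range m, z i) / m ≤ (1/(m:ℝ)) ^ (1/n) := by
    have h1 : (((∑ i ∈ Finset.range m, z i) / m) ^ n) ^ (1/n)
        ≤ (1/(m:ℝ)) ^ (1/n) :=
      Real.rpow_le_rpow (Real.rpow_nonneg hsnn n) hpm2 (by positivity)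
    rwa [← Real.rpow_mul hsnn, mul_one_div, div_self hn', Real.rpow_one] at h1
  have hfinal : ∑ i ∈ Finset.range m, z i ≤ m * (1/(m:ℝ)) ^ (1/n) := by
    rw [div_le_iff₀ hm0] at hroot
    linarith [hroot]
  calc ∑ i ∈ Finset.range m, z i ≤ m * (1/(m:ℝ)) ^ (1/n) := hfinal
    _ = (m:ℝ) ^ (1 - 1/n) := by
        rw [one_div, Real.inv_rpow hm0.le, ← Real.rpow_neg hm0.le, sub_eq_add_neg,
          Real.rpow_add hm0, Real.rpow_one]
end

section
/- Let n ≥ 1 be a real number, m ≥ 1 a natural number, and ε > 0. Then there exist pipe resistances k_1, …, k_m > 0 and flow rates q_1 ≥ q_2 ≥ ⋯ ≥ q_m > 0 such that, with q_{m+1} = 0, S_i = k_1 + ⋯ + k_i, and Δh = ∑_{i=1}^{m} k_i · q_i^n, the total discrete operation time t_d = ∑_{i=1}^{m} (q_i − q_{i+1}) · (S_i / Δh)^(1/n) satisfies t_d > m^(1 − 1/n) − ε. -/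
/-!
Take geometric flows `q_i = ρ^i - ρ^m` and resistances whose partial sums are `S_i = ρ^(-n i)`.
Every pipe then contributes at most `1` to the head `Δh ≤ m`, while every node contributes exactly
`(q_i - q_{i+1}) S_i^(1/n) = 1 - ρ` to the discrete time, so `t_d ≥ m (1 - ρ) / m^(1/n)`,
which tends to `m^(1 - 1/n)` as `ρ → 0`.
-/

open Finset Real

def geomResistance (b : ℝ) : ℕ → ℝ
  | 0 => 1
  | j + 1 => b ^ (j + 1) - b ^ j

lemma sum_range_succ_geomResistance (b : ℝ) (i : ℕ) :
    ∑ j ∈ range (i + 1), geomResistance b j = b ^ i := by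
  induction i with
  | zero => simp [geomResistance]
  | succ i ih => rw [sum_range_succ, ih, geomResistance]; ring

lemma geomResistance_pos {b : ℝ} (hb : 1 < b) (j : ℕ) : 0 < geomResistance b j := by
  cases j with
  | zero => exact one_pos
  | succ j => exact sub_pos.2 (pow_lt_pow_right₀ hb j.lt_succ_self)

lemma geomResistance_le_pow {b : ℝ} (hb : 0 ≤ b) (j : ℕ) : geomResistance b j ≤ b ^ j := by
  cases j with
  | zero => simp [geomResistance]
  | succ j => exact sub_le_self _ (pow_nonneg hb j)

lemma rpow_neg_pow {ρ : ℝ} (hρ : 0 ≤ ρ) (n : ℝ) (i : ℕ) : (ρ ^ (-n)) ^ i = ((ρ ^ i) ^ n)⁻¹ := by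
  rw [rpow_pow_comm hρ, rpow_neg (pow_nonneg hρ i)]

lemma rpow_neg_pow_rpow_one_div {ρ n : ℝ} (hρ : 0 ≤ ρ) (hn : n ≠ 0) (i : ℕ) :
    ((ρ ^ (-n)) ^ i) ^ (1 / n) = (ρ ^ i)⁻¹ := by
  rw [rpow_neg_pow hρ, inv_rpow (by positivity), one_div, rpow_rpow_inv (pow_nonneg hρ i) hn]

lemma geomResistance_mul_rpow_le_one {ρ n x : ℝ} {j : ℕ} (hρ : 0 < ρ) (hn : 0 ≤ n)
    (hx₀ : 0 ≤ x) (hx : x ≤ ρ ^ j) : geomResistance (ρ ^ (-n)) j * x ^ n ≤ 1 := by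
  have hpos : 0 < (ρ ^ j) ^ n := by positivity
  calc geomResistance (ρ ^ (-n)) j * x ^ n
      ≤ (ρ ^ (-n)) ^ j * (ρ ^ j) ^ n := by
        gcongr
        exact geomResistance_le_pow (by positivity) j
    _ = 1 := by rw [rpow_neg_pow hρ.le, inv_mul_cancel₀ hpos.ne']

lemma sum_geomResistance_mul_rpow_le {ρ n : ℝ} {m : ℕ} {q : ℕ → ℝ} (hρ : 0 < ρ) (hn : 0 ≤ n)
    (hq₀ : ∀ j < m, 0 ≤ q j) (hq : ∀ j < m, q j ≤ ρ ^ j) :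
    ∑ j ∈ range m, geomResistance (ρ ^ (-n)) j * q j ^ n ≤ m := by
  calc ∑ j ∈ range m, geomResistance (ρ ^ (-n)) j * q j ^ n
      ≤ ∑ _j ∈ range m, (1 : ℝ) := sum_le_sum fun j hj =>
        geomResistance_mul_rpow_le_one hρ hn (hq₀ j (mem_range.1 hj)) (hq j (mem_range.1 hj))
    _ = m := by simp

lemma sum_mul_div_rpow {m : ℕ} {d S : ℕ → ℝ} {Δ : ℝ} (hS : ∀ i ∈ range m, 0 ≤ S i) (hΔ : 0 ≤ Δ)
    (p : ℝ) : ∑ i ∈ range m, d i * (S i / Δ) ^ p = (∑ i ∈ range m, d i * S i ^ p) / Δ ^ p := by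
  rw [sum_div]
  exact sum_congr rfl fun i hi => by rw [div_rpow (hS i hi) hΔ, mul_div_assoc]

noncomputable def discreteTime (n : ℝ) (m : ℕ) (k q : ℕ → ℝ) : ℝ :=
  ∑ i ∈ range m, (q i - q (i + 1))
    * ((∑ j ∈ range (i + 1), k j) / (∑ j ∈ range m, k j * q j ^ n)) ^ (1 / n)

lemma discreteTime_geom_ge {ρ n : ℝ} {m : ℕ} (hρ₀ : 0 < ρ) (hρ₁ : ρ < 1) (hn : 0 < n) (hm : 1 ≤ m) :
    (m : ℝ) ^ (1 - 1 / n) * (1 - ρ)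
      ≤ discreteTime n m (geomResistance (ρ ^ (-n))) fun i => ρ ^ i - ρ ^ m := by
  have hm₀ : (0 : ℝ) < m := by exact_mod_cast hm
  set k := geomResistance (ρ ^ (-n))
  set q : ℕ → ℝ := fun i => ρ ^ i - ρ ^ m
  have hq_pos : ∀ i < m, 0 < q i := fun i hi =>
    sub_pos.2 (pow_lt_pow_right_of_lt_one₀ hρ₀ hρ₁ hi)
  have hk_pos : ∀ j, 0 < k j :=
    geomResistance_pos (one_lt_rpow_of_pos_of_lt_one_of_neg hρ₀ hρ₁ (neg_neg_of_pos hn))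
  set Δ := ∑ j ∈ range m, k j * q j ^ n
  have hΔ_pos : 0 < Δ := sum_pos (fun j hj => mul_pos (hk_pos j)
    (rpow_pos_of_pos (hq_pos j (mem_range.1 hj)) n)) (nonempty_range_iff.2 (by omega))
  have hΔ_le : Δ ≤ m := sum_geomResistance_mul_rpow_le hρ₀ hn.le (fun j hj => (hq_pos j hj).le)
    fun j _ => sub_le_self _ (pow_nonneg hρ₀.le m)
  have hnode : ∀ i, (q i - q (i + 1)) * ((ρ ^ (-n)) ^ i) ^ (1 / n) = 1 - ρ := fun i => by
    rw [rpow_neg_pow_rpow_one_div hρ₀.le hn.ne']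
    field_simp
    ring
  unfold discreteTime
  simp only [sum_range_succ_geomResistance, k]
  rw [sum_mul_div_rpow (fun i _ => by positivity) hΔ_pos.le, rpow_sub hm₀, rpow_one]
  simp only [hnode, sum_const, card_range, nsmul_eq_mul]
  rw [div_mul_eq_mul_div]
  gcongr

lemma sub_lt_mul_one_sub_div_add {M ε : ℝ} (hM : 0 < M) (hε : 0 < ε) :
    M - ε < M * (1 - ε / (ε + M)) := by
  rw [one_sub_div (by positivity), add_sub_cancel_left, mul_div_assoc', lt_div_iff₀ (by positivity)]
  nlinarith

/-- Tightness of the bound `m^(1 - 1/n)`: for every `ε > 0` there are positive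
resistances `k_1, …, k_m` and flows `q_1 ≥ ⋯ ≥ q_m > 0` (encoded as
`k i`, `q i` for `i = 0, …, m-1`, with `q m = 0` encoding `q_{m+1} = 0`)
whose discrete operation time exceeds `m^(1 - 1/n) - ε`. -/
theorem discrete_time_sup (n : ℝ) (hn : 1 ≤ n) (m : ℕ) (hm : 1 ≤ m)
    (ε : ℝ) (hε : 0 < ε) :
    ∃ k q : ℕ → ℝ, (∀ i < m, 0 < k i) ∧ (∀ i < m, 0 < q i) ∧
      (∀ i < m, q (i + 1) ≤ q i) ∧ q m = 0 ∧
      ∑ i ∈ Finset.range m,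
          (q i - q (i + 1))
            * ((∑ j ∈ Finset.range (i + 1), k j)
                / (∑ j ∈ Finset.range m, k j * (q j) ^ n)) ^ (1 / n)
        > (m : ℝ) ^ (1 - 1 / n) - ε := by
  have hn₀ : 0 < n := by linarith
  set ρ := ε / (ε + (m : ℝ) ^ (1 - 1 / n))
  have hM : 0 < (m : ℝ) ^ (1 - 1 / n) := by positivity
  have hρ₀ : 0 < ρ := by positivity
  have hρ₁ : ρ < 1 := (div_lt_one (by positivity)).2 (by linarith)
  have hb : 1 < ρ ^ (-n) := one_lt_rpow_of_pos_of_lt_one_of_neg hρ₀ hρ₁ (by linarith)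
  refine ⟨geomResistance (ρ ^ (-n)), fun i => ρ ^ i - ρ ^ m, fun i _ => geomResistance_pos hb i,
    fun i hi => sub_pos.2 (pow_lt_pow_right_of_lt_one₀ hρ₀ hρ₁ hi),
    fun i _ => sub_le_sub_right (pow_le_pow_of_le_one hρ₀.le hρ₁.le i.le_succ) _, sub_self _, ?_⟩
  exact (sub_lt_mul_one_sub_div_add hM hε).trans_le (discreteTime_geom_ge hρ₀ hρ₁ hn₀ hm)
end
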